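/- Let e be a lower arc with center c and endpoints p₁, p₂, and let x ∈ ℝ². The closed unit disc D(x) centered at x intersects e if and only if at least one of the following holds: ‖x − p₁‖ ≤ 1 (equivalently p₁ ∈ D(x)), or ‖x − p₂‖ ≤ 1 (equivalently p₂ ∈ D(x)), or x ∈ L(e) (i.e. ‖x − c‖ ≤ 2 and x lies on or below the line ℓ through 2p₁ − c and 2p₂ − c). -/

import Mathlib

noncomputable section

/-- The plane. -/
abbrev E2 := EuclideanSpace ℝ (Fin 2)

/-- A lower circular arc of unit radius: center `c`, endpoints `p₁, p₂` on the
unit circle around `c`, both not above `c`, with `p₁` strictly left of `p₂`. -/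
structure LowerArc where
  c : E2
  p₁ : E2
  p₂ : E2
  h₁ : ‖p₁ - c‖ = 1
  h₂ : ‖p₂ - c‖ = 1
  hy₁ : p₁ 1 ≤ c 1
  hy₂ : p₂ 1 ≤ c 1
  hx : p₁ 0 < p₂ 0

/-- The set of points of a lower arc. -/
def LowerArc.pts (e : LowerArc) : Set E2 :=
  {p | ‖p - e.c‖ = 1 ∧ e.p₁ 0 ≤ p 0 ∧ p 0 ≤ e.p₂ 0 ∧ p 1 ≤ e.c 1}

/-- The tangent point of `D(p₁)` with `D⁺(c)`. -/
def LowerArc.t₁ (e : LowerArc) : E2 := (2 : ℝ) • e.p₁ - e.c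

/-- The tangent point of `D(p₂)` with `D⁺(c)`. -/
def LowerArc.t₂ (e : LowerArc) : E2 := (2 : ℝ) • e.p₂ - e.c

/-- The closed halfplane of points lying on or below the (non-vertical) line
`ℓ` through the two tangent points `2p₁ - c` and `2p₂ - c`. -/
def LowerArc.lowerHalf (e : LowerArc) : Set E2 :=
  {x | (e.t₂ 0 - e.t₁ 0) * (x 1 - e.t₁ 1) ≤ (e.t₂ 1 - e.t₁ 1) * (x 0 - e.t₁ 0)}

/-- The region `L(e) = D⁺(c) ∩ ℓ⁻`. -/
def LowerArc.L (e : LowerArc) : Set E2 := Metric.closedBall e.c 2 ∩ e.lowerHalf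
set_option maxHeartbeats 1000000
namespace Stmt15Aux

/-- cross product of two ordered unit vectors in the lower half circle is nonneg -/
lemma cross_nonneg (a b a' b' : ℝ) (h1 : a^2+b^2=1) (h2 : a'^2+b'^2=1)
    (hb : b ≤ 0) (hb' : b' ≤ 0) (ha : a ≤ a') : 0 ≤ a*b' - b*a' := by
  rcases le_or_gt 0 a with h0 | h0
  · -- 0 ≤ a ≤ a', so -b ≥ -b'
    have hbb : -b' ≤ -b := by nlinarith
    nlinarith [mul_le_mul_of_nonneg_right hbb (le_trans h0 ha), mul_le_mul_of_nonneg_left (sub_nonneg.2 ha) (neg_nonneg.2 hb')]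
  · rcases le_or_gt 0 a' with h0' | h0'
    · nlinarith [mul_nonneg (neg_nonneg.2 hb') (neg_nonneg.2 h0.le), mul_nonneg (neg_nonneg.2 hb) h0']
    · -- a ≤ a' < 0 : -b ≤ -b'
      have hbb : -b ≤ -b' := by nlinarith
      nlinarith [mul_le_mul_of_nonneg_right hbb (neg_nonneg.2 h0'.le), mul_le_mul_of_nonneg_left (sub_nonneg.2 ha) (neg_nonneg.2 hb')]

/-- degenerate case: zero cross product forces the horizontal diameter -/
lemma degen (a₁ b₁ a₂ b₂ : ℝ) (ha₁ : a₁^2+b₁^2=1) (ha₂ : a₂^2+b₂^2=1)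
    (hb₁ : b₁ ≤ 0) (hb₂ : b₂ ≤ 0) (h12 : a₁ < a₂) (hσ : a₁*b₂ - a₂*b₁ = 0) :
    b₁ = 0 ∧ b₂ = 0 ∧ a₁ = -1 ∧ a₂ = 1 := by
  have hc2 : (a₁*b₂-a₂*b₁)^2 + (a₁*a₂+b₁*b₂)^2 = 1 := by
    linear_combination (b₂^2+a₂^2)*ha₁ + ha₂
  have hfac : (a₁*a₂+b₁*b₂ - 1)*(a₁*a₂+b₁*b₂ + 1) = 0 := by nlinarith [hσ, hc2]
  rcases mul_eq_zero.1 hfac with hc | hc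
  · exfalso
    have e : (a₁-a₂)^2+(b₁-b₂)^2 = 0 := by linear_combination ha₁ + ha₂ - 2*hc
    have : a₁ = a₂ := by nlinarith [sq_nonneg (a₁-a₂), sq_nonneg (b₁-b₂)]
    linarith
  · have e : (a₁+a₂)^2+(b₁+b₂)^2 = 0 := by linear_combination ha₁ + ha₂ + 2*hc
    have h1 : a₂ = -a₁ := by nlinarith [sq_nonneg (a₁+a₂), sq_nonneg (b₁+b₂)]
    have h2 : b₂ = -b₁ := by nlinarith [sq_nonneg (a₁+a₂), sq_nonneg (b₁+b₂)]
    have hb0 : b₁ = 0 := by linarith [hb₁, h2 ▸ hb₂]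
    have ha0 : a₁ < 0 := by rw [h1] at h12; linarith
    have : (a₁-1)*(a₁+1) = 0 := by rw [hb0] at ha₁; linear_combination ha₁
    have ha1 : a₁ = -1 := by
      rcases mul_eq_zero.1 this with h | h
      · exfalso; linarith [h]
      · linarith
    exact ⟨hb0, by rw [h2, hb0]; ring, ha1, by rw [h1, ha1]; ring⟩

/-- Key forward lemma. -/
lemma core (a₁ b₁ a₂ b₂ w₀ w₁ u₀ u₁ : ℝ)
    (ha₁ : a₁^2+b₁^2=1) (ha₂ : a₂^2+b₂^2=1) (hw : w₀^2+w₁^2=1)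
    (hb₁ : b₁ ≤ 0) (hb₂ : b₂ ≤ 0) (hw₁ : w₁ ≤ 0)
    (h1w : a₁ ≤ w₀) (hw2 : w₀ ≤ a₂) (h12 : a₁ < a₂)
    (hW : u₀^2+u₁^2 ≤ 2*(u₀*w₀+u₁*w₁))
    (hA : 2*(u₀*a₁+u₁*b₁) < u₀^2+u₁^2)
    (hB : 2*(u₀*a₂+u₁*b₂) < u₀^2+u₁^2) :
    0 ≤ a₁*u₁ - b₁*u₀ := by
  have hσ : 0 ≤ a₁*b₂ - a₂*b₁ := by
    have := cross_nonneg a₁ b₁ a₂ b₂ ha₁ ha₂ hb₁ hb₂ h12.le; linarith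
  have hΛ : 0 ≤ w₀*b₂ - w₁*a₂ := by
    have := cross_nonneg w₀ w₁ a₂ b₂ hw ha₂ hw₁ hb₂ hw2; linarith
  have hM : 0 ≤ a₁*w₁ - b₁*w₀ := by
    have := cross_nonneg a₁ b₁ w₀ w₁ ha₁ hw hb₁ hw₁ h1w; linarith
  have hr2 : 0 < u₀^2+u₁^2 := by
    by_contra h
    push_neg at h
    have h0 : u₀ = 0 := by nlinarith [sq_nonneg u₀, sq_nonneg u₁]
    have h1 : u₁ = 0 := by nlinarith [sq_nonneg u₀, sq_nonneg u₁]
    rw [h0, h1] at hA; norm_num at hA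
  by_contra hQ
  push_neg at hQ
  rcases eq_or_lt_of_le hσ with hσ0 | hσpos
  · -- degenerate: horizontal diameter
    obtain ⟨e1, e2, e3, e4⟩ := degen a₁ b₁ a₂ b₂ ha₁ ha₂ hb₁ hb₂ h12 hσ0.symm
    rw [e1, e3] at hQ hA
    rw [e2, e4] at hB
    have hw2' : w₀ ≤ 1 := by rw [e4] at hw2; exact hw2
    have h1w' : -1 ≤ w₀ := by rw [e3] at h1w; exact h1w
    have hu₁ : 0 < u₁ := by nlinarith [hQ]
    rcases le_or_gt 0 u₀ with hu | hu
    · nlinarith [mul_nonneg hu (by linarith : (0:ℝ) ≤ 1 - w₀),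
        mul_nonneg hu₁.le (neg_nonneg.2 hw₁)]
    · nlinarith [mul_nonneg (neg_nonneg.2 hu.le) (by linarith : (0:ℝ) ≤ w₀ + 1),
        mul_nonneg hu₁.le (neg_nonneg.2 hw₁)]
  · -- σ > 0
    rcases le_or_gt 0 (u₀*a₁+u₁*b₁) with hA0 | hA0
    · -- A ≥ 0 case
      have hW1le : w₀*a₁+w₁*b₁ ≤ 1 := by nlinarith [sq_nonneg (w₀-a₁), sq_nonneg (w₁-b₁)]
      have id5 : u₀*w₀+u₁*w₁ = (u₀*a₁+u₁*b₁)*(w₀*a₁+w₁*b₁) + (a₁*u₁-b₁*u₀)*(a₁*w₁-b₁*w₀) := by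
        linear_combination (-(w₁*u₁) - w₀*u₀) * ha₁
      nlinarith [mul_nonneg hM (neg_nonneg.2 hQ.le), mul_le_mul_of_nonneg_left hW1le hA0]
    · -- A < 0
      have id7 : (a₁*b₂-a₂*b₁)*(u₀*w₀+u₁*w₁) = (w₀*b₂-w₁*a₂)*(u₀*a₁+u₁*b₁) + (a₁*w₁-b₁*w₀)*(u₀*a₂+u₁*b₂) := by
        ring
      have huw : 0 < u₀*w₀+u₁*w₁ := by nlinarith
      rcases le_or_gt (u₀*b₂ - u₁*a₂) 0 with hP | hP
      · -- P ≤ 0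
        rcases le_or_gt 0 (u₀*a₂+u₁*b₂) with hB0 | hB0
        · have hW2le : w₀*a₂+w₁*b₂ ≤ 1 := by nlinarith [sq_nonneg (w₀-a₂), sq_nonneg (w₁-b₂)]
          have id6 : u₀*w₀+u₁*w₁ = (u₀*a₂+u₁*b₂)*(w₀*a₂+w₁*b₂) + (u₁*a₂-u₀*b₂)*(w₁*a₂-w₀*b₂) := by
            linear_combination (-(w₁*u₁) - w₀*u₀) * ha₂
          nlinarith [mul_nonneg (by linarith : (0:ℝ) ≤ u₁*a₂-u₀*b₂) hΛ,
            mul_le_mul_of_nonneg_left hW2le hB0]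
        · nlinarith [mul_nonneg hΛ (by linarith : (0:ℝ) ≤ -(u₀*a₁+u₁*b₁)),
            mul_nonneg hM (by linarith : (0:ℝ) ≤ -(u₀*a₂+u₁*b₂)),
            mul_pos hσpos huw]
      · -- P > 0
        have hMB : 0 < (a₁*w₁-b₁*w₀)*(u₀*a₂+u₁*b₂) := by
          nlinarith [mul_nonneg hΛ (by linarith : (0:ℝ) ≤ -(u₀*a₁+u₁*b₁)), mul_pos hσpos huw]
        have hBpos : 0 < u₀*a₂+u₁*b₂ := by
          rcases lt_trichotomy (u₀*a₂+u₁*b₂) 0 with h | h | h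
          · exfalso; nlinarith [mul_nonneg hM (by linarith : (0:ℝ) ≤ -(u₀*a₂+u₁*b₂))]
          · exfalso; rw [h] at hMB; norm_num at hMB
          · exact h
        have id8 : (a₁*b₂-a₂*b₁)*(u₀*a₂+u₁*b₂) = (a₁*a₂+b₁*b₂)*(u₀*b₂-u₁*a₂) + (a₁*u₁-b₁*u₀) := by
          linear_combination (-(b₁*u₀) + a₁*u₁) * ha₂
        have id9 : (a₁*b₂-a₂*b₁)*(u₀*a₁+u₁*b₁) = (u₀*b₂-u₁*a₂) + (a₁*a₂+b₁*b₂)*(a₁*u₁-b₁*u₀) := by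
          linear_combination (b₂*u₀ - a₂*u₁) * ha₁
        have hc2 : (a₁*b₂-a₂*b₁)^2 + (a₁*a₂+b₁*b₂)^2 = 1 := by
          linear_combination (b₂^2+a₂^2)*ha₁ + ha₂
        have hcPQ : 0 < (a₁*a₂+b₁*b₂)*(u₀*b₂-u₁*a₂) + (a₁*u₁-b₁*u₀) := by
          rw [← id8]; exact mul_pos hσpos hBpos
        have hPcQ : (u₀*b₂-u₁*a₂) + (a₁*a₂+b₁*b₂)*(a₁*u₁-b₁*u₀) < 0 := by
          rw [← id9]; exact mul_neg_of_pos_of_neg hσpos hA0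
        have hcpos : 0 < a₁*a₂+b₁*b₂ := by nlinarith [hP, hQ, hcPQ]
        have hc2lt : (a₁*a₂+b₁*b₂)^2 < 1 := by nlinarith [mul_pos hσpos hσpos]
        have t1 : (a₁*a₂+b₁*b₂)*((u₀*b₂-u₁*a₂) + (a₁*a₂+b₁*b₂)*(a₁*u₁-b₁*u₀)) < 0 :=
          mul_neg_of_pos_of_neg hcpos hPcQ
        nlinarith [t1, hcPQ, mul_pos (neg_pos.2 hQ) (by linarith : (0:ℝ) < 1 - (a₁*a₂+b₁*b₂)^2)]


/-- From D ≥ ‖n‖², ‖u‖ ≤ 2: sign of the decomposed cross product. -/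
lemma half (σ c D T r2 : ℝ) (hσ : 0 < σ) (hl : σ^2 + c^2 = 1) (hD : 2+2*c ≤ D)
    (h4 : r2 ≤ 4) (hT : T^2 + D^2 = (2+2*c)*r2) : 0 ≤ D*σ + T*(1+c) := by
  have hc1 : 0 < 1 + c := by nlinarith [mul_pos hσ hσ]
  have hD0 : 0 ≤ D := by linarith
  rcases le_or_gt 0 T with hT0 | hT0
  · nlinarith [mul_nonneg hD0 hσ.le, mul_nonneg hT0 hc1.le]
  · have h24 : (2+2*c)*r2 ≤ (2+2*c)*4 := by nlinarith [hc1]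
    have e1 : T^2 ≤ 8+8*c - D^2 := by nlinarith
    have hD2 : 4*(1+c)^2 ≤ D^2 := by nlinarith [hD, hc1]
    have key : (T*(1+c))^2 ≤ (D*σ)^2 := by
      nlinarith [mul_le_mul_of_nonneg_right e1 (sq_nonneg (1+c)),
        mul_nonneg hc1.le (by nlinarith : (0:ℝ) ≤ 2*D^2 - 8*(1+c)^2)]
    have hDσ : 0 ≤ D*σ := mul_nonneg hD0 hσ.le
    nlinarith [key, hDσ]

/-- Direction bound: if u points (weakly) ccw of the unit vector (a,b) in the lower
half plane, then its first coordinate bound a*r ≤ u₀ holds. -/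
lemma radial (a b u₀ u₁ r : ℝ) (h : a^2+b^2=1) (hb : b ≤ 0) (halt : a < 1)
    (hS : 0 ≤ a*u₁ - b*u₀) (hu₁ : u₁ ≤ 0) (hr : r^2 = u₀^2+u₁^2) (hrpos : 0 < r) :
    a*r ≤ u₀ := by
  rcases le_or_gt a 0 with ha | ha
  · rcases le_or_gt 0 u₀ with hu | hu
    · nlinarith [mul_nonneg (neg_nonneg.2 ha) hrpos.le]
    · have h1 : 0 ≤ a*u₁ := by nlinarith [mul_nonneg (neg_nonneg.2 ha) (neg_nonneg.2 hu₁)]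
      have h2 : 0 ≤ b*u₀ := by nlinarith [mul_nonneg (neg_nonneg.2 hb) (neg_nonneg.2 hu.le)]
      have hsq : (b*u₀)^2 ≤ (a*u₁)^2 := by nlinarith
      have haru : u₀^2 ≤ (a*r)^2 := by nlinarith [sq_nonneg u₀]
      nlinarith [mul_nonneg (neg_nonneg.2 ha) hrpos.le, haru]
  · have hb' : b < 0 := by
      rcases eq_or_lt_of_le hb with h0 | h0
      · exfalso; nlinarith [h0]
      · exact h0
    have hu₀ : 0 ≤ u₀ := by nlinarith [hS, mul_nonneg ha.le (neg_nonneg.2 hu₁)]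
    have h1 : 0 ≤ -(a*u₁) := by nlinarith
    have h2 : -(a*u₁) ≤ -(b*u₀) := by linarith
    have hsq : (a*u₁)^2 ≤ (b*u₀)^2 := by nlinarith
    have haru : (a*r)^2 ≤ u₀^2 := by nlinarith
    nlinarith [mul_nonneg ha.le hrpos.le, haru]

/-- Full forward direction in relative coordinates. -/
lemma fwd (a₁ b₁ a₂ b₂ w₀ w₁ u₀ u₁ : ℝ)
    (ha₁ : a₁^2+b₁^2=1) (ha₂ : a₂^2+b₂^2=1) (hw : w₀^2+w₁^2=1)
    (hb₁ : b₁ ≤ 0) (hb₂ : b₂ ≤ 0) (hw₁ : w₁ ≤ 0)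
    (h1w : a₁ ≤ w₀) (hw2 : w₀ ≤ a₂) (h12 : a₁ < a₂)
    (hW : u₀^2+u₁^2 ≤ 2*(u₀*w₀+u₁*w₁))
    (hA : 2*(u₀*a₁+u₁*b₁) < u₀^2+u₁^2)
    (hB : 2*(u₀*a₂+u₁*b₂) < u₀^2+u₁^2) :
    (a₂-a₁)*(u₁-2*b₁) ≤ (b₂-b₁)*(u₀-2*a₁) := by
  have hS1 : 0 ≤ a₁*u₁ - b₁*u₀ :=
    core a₁ b₁ a₂ b₂ w₀ w₁ u₀ u₁ ha₁ ha₂ hw hb₁ hb₂ hw₁ h1w hw2 h12 hW hA hB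
  have hS2 : 0 ≤ b₂*u₀ - a₂*u₁ := by
    have := core (-a₂) b₂ (-a₁) b₁ (-w₀) w₁ (-u₀) u₁
      (by linarith [ha₂] : (-a₂)^2+b₂^2=1) (by linarith [ha₁] : (-a₁)^2+b₁^2=1)
      (by linarith [hw] : (-w₀)^2+w₁^2=1) hb₂ hb₁ hw₁
      (by linarith) (by linarith) (by linarith)
      (by nlinarith [hW]) (by nlinarith [hB]) (by nlinarith [hA])
    nlinarith [this]
  have hσ : 0 ≤ a₁*b₂ - a₂*b₁ := by
    have := cross_nonneg a₁ b₁ a₂ b₂ ha₁ ha₂ hb₁ hb₂ h12.le; linarith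
  have hr2 : 0 < u₀^2+u₁^2 := by
    by_contra h
    push_neg at h
    have h0 : u₀ = 0 := by nlinarith [sq_nonneg u₀, sq_nonneg u₁]
    have h1 : u₁ = 0 := by nlinarith [sq_nonneg u₀, sq_nonneg u₁]
    rw [h0, h1] at hA; norm_num at hA
  -- identity: B*S₁ + A*S₂ = r²*σ
  have id4 : (u₀*a₂+u₁*b₂)*(a₁*u₁-b₁*u₀) + (u₀*a₁+u₁*b₁)*(b₂*u₀-a₂*u₁)
      = (u₀^2+u₁^2)*(a₁*b₂-a₂*b₁) := by ring
  have t1 : 0 ≤ (u₀^2+u₁^2 - 2*(u₀*a₂+u₁*b₂))*(a₁*u₁-b₁*u₀) :=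
    mul_nonneg (by linarith) hS1
  have t2 : 0 ≤ (u₀^2+u₁^2 - 2*(u₀*a₁+u₁*b₁))*(b₂*u₀-a₂*u₁) :=
    mul_nonneg (by linarith) hS2
  -- r²(S₁+S₂) ≥ 2 r² σ hence S₁+S₂ ≥ 2σ
  have hsum : 2*(a₁*b₂-a₂*b₁) ≤ (a₁*u₁-b₁*u₀) + (b₂*u₀-a₂*u₁) := by
    nlinarith [t1, t2, id4, hr2, mul_pos hr2 hr2]
  nlinarith [hsum]

/-- Full backward direction (third disjunct case) in relative coordinates. -/
lemma bwd (a₁ b₁ a₂ b₂ u₀ u₁ : ℝ)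
    (ha₁ : a₁^2+b₁^2=1) (ha₂ : a₂^2+b₂^2=1)
    (hb₁ : b₁ ≤ 0) (hb₂ : b₂ ≤ 0) (h12 : a₁ < a₂)
    (h4 : u₀^2+u₁^2 ≤ 4)
    (hL : (a₂-a₁)*(u₁-2*b₁) ≤ (b₂-b₁)*(u₀-2*a₁)) :
    ∃ w₀ w₁ : ℝ, w₀^2+w₁^2 = 1 ∧ a₁ ≤ w₀ ∧ w₀ ≤ a₂ ∧ w₁ ≤ 0 ∧
      (u₀-w₀)^2+(u₁-w₁)^2 ≤ 1 := by
  have hσ : 0 ≤ a₁*b₂ - a₂*b₁ := by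
    have := cross_nonneg a₁ b₁ a₂ b₂ ha₁ ha₂ hb₁ hb₂ h12.le; linarith
  rcases eq_or_lt_of_le (by positivity : (0:ℝ) ≤ u₀^2+u₁^2) with hr0 | hr2
  · -- u = 0 : take the left endpoint
    have h0 : u₀ = 0 := by nlinarith [sq_nonneg u₀, sq_nonneg u₁]
    have h1 : u₁ = 0 := by nlinarith [sq_nonneg u₀, sq_nonneg u₁]
    exact ⟨a₁, b₁, ha₁, le_refl _, h12.le, hb₁, by rw [h0, h1]; nlinarith [ha₁]⟩
  · set r := Real.sqrt (u₀^2+u₁^2) with hrdef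
    have hr : r^2 = u₀^2+u₁^2 := Real.sq_sqrt (by positivity)
    have hrpos : 0 < r := Real.sqrt_pos.2 hr2
    have hrle : r ≤ 2 := by nlinarith [hr, hrpos]
    -- main geometric facts
    have key : u₁ ≤ 0 ∧ 0 ≤ a₁*u₁ - b₁*u₀ ∧ 0 ≤ b₂*u₀ - a₂*u₁ := by
      rcases eq_or_lt_of_le hσ with hσ0 | hσpos
      · obtain ⟨e1, e2, e3, e4⟩ := degen a₁ b₁ a₂ b₂ ha₁ ha₂ hb₁ hb₂ h12 hσ0.symm
        rw [e1, e2, e3, e4] at hL ⊢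
        constructor
        · nlinarith [hL]
        · constructor <;> nlinarith [hL]
      · -- σ > 0
        have hc1 : 0 < 1 + (a₁*a₂+b₁*b₂) := by
          have hc2 : (a₁*b₂-a₂*b₁)^2 + (a₁*a₂+b₁*b₂)^2 = 1 := by
            linear_combination (b₂^2+a₂^2)*ha₁ + ha₂
          nlinarith [mul_pos hσpos hσpos]
        have hS : 2*(a₁*b₂-a₂*b₁) ≤ (a₁*u₁-b₁*u₀) + (b₂*u₀-a₂*u₁) := by nlinarith [hL]
        have hD : 2+2*(a₁*a₂+b₁*b₂) ≤ u₀*(a₁+a₂)+u₁*(b₁+b₂) := by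
          have id1 : (1+(a₁*a₂+b₁*b₂))*((a₁*u₁-b₁*u₀) + (b₂*u₀-a₂*u₁) - 2*(a₁*b₂-a₂*b₁))
              = (a₁*b₂-a₂*b₁)*((u₀*(a₁+a₂)+u₁*(b₁+b₂)) - (2+2*(a₁*a₂+b₁*b₂))) := by
            linear_combination (a₂*u₁ - b₂*u₀) * ha₁ + (b₁*u₀ - a₁*u₁) * ha₂
          nlinarith [mul_nonneg hc1.le (by linarith : (0:ℝ) ≤ (a₁*u₁-b₁*u₀) + (b₂*u₀-a₂*u₁) - 2*(a₁*b₂-a₂*b₁)), id1]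
        have hlag : ((a₁+a₂)*u₁-(b₁+b₂)*u₀)^2 + (u₀*(a₁+a₂)+u₁*(b₁+b₂))^2
            = (2+2*(a₁*a₂+b₁*b₂))*(u₀^2+u₁^2) := by
          linear_combination (u₁^2+u₀^2)*ha₁ + (u₁^2+u₀^2)*ha₂
        have hc2 : (a₁*b₂-a₂*b₁)^2 + (a₁*a₂+b₁*b₂)^2 = 1 := by
          linear_combination (b₂^2+a₂^2)*ha₁ + ha₂
        have hhalf1 := half (a₁*b₂-a₂*b₁) (a₁*a₂+b₁*b₂)
          (u₀*(a₁+a₂)+u₁*(b₁+b₂)) ((a₁+a₂)*u₁-(b₁+b₂)*u₀) (u₀^2+u₁^2)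
          hσpos hc2 hD h4 hlag
        have hhalf2 := half (a₁*b₂-a₂*b₁) (a₁*a₂+b₁*b₂)
          (u₀*(a₁+a₂)+u₁*(b₁+b₂)) (-((a₁+a₂)*u₁-(b₁+b₂)*u₀)) (u₀^2+u₁^2)
          hσpos hc2 hD h4 (by nlinarith [hlag])
        have id2 : (2+2*(a₁*a₂+b₁*b₂))*(a₁*u₁-b₁*u₀)
            = (u₀*(a₁+a₂)+u₁*(b₁+b₂))*(a₁*b₂-a₂*b₁)
              + ((a₁+a₂)*u₁-(b₁+b₂)*u₀)*(1+(a₁*a₂+b₁*b₂)) := by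
          linear_combination (a₂*u₁ - b₂*u₀) * ha₁ + (b₁*u₀ - a₁*u₁) * ha₂
        have id2b : (2+2*(a₁*a₂+b₁*b₂))*(b₂*u₀-a₂*u₁)
            = (u₀*(a₁+a₂)+u₁*(b₁+b₂))*(a₁*b₂-a₂*b₁)
              - ((a₁+a₂)*u₁-(b₁+b₂)*u₀)*(1+(a₁*a₂+b₁*b₂)) := by
          linear_combination (a₂*u₁ - b₂*u₀) * ha₁ + (b₁*u₀ - a₁*u₁) * ha₂
        have hS1 : 0 ≤ a₁*u₁ - b₁*u₀ := by nlinarith [hhalf1, id2, hc1]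
        have hS2 : 0 ≤ b₂*u₀ - a₂*u₁ := by nlinarith [hhalf2, id2b, hc1]
        refine ⟨?_, hS1, hS2⟩
        -- u₁ σ = b₂ S₁ + b₁ S₂ ≤ 0
        have id3 : b₂*(a₁*u₁-b₁*u₀) + b₁*(b₂*u₀-a₂*u₁) = u₁*(a₁*b₂-a₂*b₁) := by ring
        nlinarith [mul_nonneg (neg_nonneg.2 hb₂) hS1, mul_nonneg (neg_nonneg.2 hb₁) hS2, mul_pos hσpos hσpos]
    obtain ⟨hu₁, hS1, hS2⟩ := key
    have ha₂le : a₂ ≤ 1 := by nlinarith [sq_nonneg b₂]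
    have ha₁lt : a₁ < 1 := lt_of_lt_of_le h12 ha₂le
    have ha₂gt : -1 < a₂ := by nlinarith [sq_nonneg b₁, sq_nonneg a₁]
    have hl : a₁*r ≤ u₀ := radial a₁ b₁ u₀ u₁ r ha₁ hb₁ ha₁lt hS1 hu₁ hr hrpos
    have hrgoal : (-a₂)*r ≤ -u₀ := by
      refine radial (-a₂) b₂ (-u₀) u₁ r (by linarith [ha₂]) hb₂ (by linarith) ?_ hu₁ (by linarith [hr]) hrpos
      nlinarith [hS2]
    refine ⟨u₀/r, u₁/r, ?_, ?_, ?_, ?_, ?_⟩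
    · field_simp
      linarith [hr]
    · rw [le_div_iff₀ hrpos]; exact hl
    · rw [div_le_iff₀ hrpos]; nlinarith [hrgoal]
    · exact div_nonpos_of_nonpos_of_nonneg hu₁ hrpos.le
    · have e0 : u₀ - u₀/r = u₀*(r-1)/r := by field_simp
      have e1 : u₁ - u₁/r = u₁*(r-1)/r := by field_simp
      rw [e0, e1, div_pow, div_pow, ← add_div, div_le_one (by positivity)]
      have : (u₀*(r-1))^2 + (u₁*(r-1))^2 = (u₀^2+u₁^2)*(r-1)^2 := by ring
      rw [this, ← hr]
      have h1 : (r-1)^2 ≤ 1 := by nlinarith [mul_nonneg hrpos.le (by linarith : (0:ℝ) ≤ 2 - r)]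
      nlinarith [mul_le_mul_of_nonneg_left h1 (sq_nonneg r)]


/-- The full characterization in relative coordinates. -/
lemma main_real (a₁ b₁ a₂ b₂ u₀ u₁ : ℝ)
    (ha₁ : a₁^2+b₁^2=1) (ha₂ : a₂^2+b₂^2=1)
    (hb₁ : b₁ ≤ 0) (hb₂ : b₂ ≤ 0) (h12 : a₁ < a₂) :
    (∃ w₀ w₁ : ℝ, w₀^2+w₁^2 = 1 ∧ a₁ ≤ w₀ ∧ w₀ ≤ a₂ ∧ w₁ ≤ 0 ∧
      (u₀-w₀)^2+(u₁-w₁)^2 ≤ 1) ↔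
    ((u₀-a₁)^2+(u₁-b₁)^2 ≤ 1 ∨ (u₀-a₂)^2+(u₁-b₂)^2 ≤ 1 ∨
      (u₀^2+u₁^2 ≤ 4 ∧ (a₂-a₁)*(u₁-2*b₁) ≤ (b₂-b₁)*(u₀-2*a₁))) := by
  constructor
  · rintro ⟨w₀, w₁, hw, h1w, hw2, hw₁, hd⟩
    rcases le_or_gt ((u₀-a₁)^2+(u₁-b₁)^2) 1 with h | hA'
    · exact Or.inl h
    rcases le_or_gt ((u₀-a₂)^2+(u₁-b₂)^2) 1 with h | hB'
    · exact Or.inr (Or.inl h)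
    refine Or.inr (Or.inr ?_)
    have hW : u₀^2+u₁^2 ≤ 2*(u₀*w₀+u₁*w₁) := by nlinarith [hd, hw]
    have hA : 2*(u₀*a₁+u₁*b₁) < u₀^2+u₁^2 := by nlinarith [hA', ha₁]
    have hB : 2*(u₀*a₂+u₁*b₂) < u₀^2+u₁^2 := by nlinarith [hB', ha₂]
    have hCS : (u₀*w₀+u₁*w₁)^2 ≤ u₀^2+u₁^2 := by
      nlinarith [sq_nonneg (u₀*w₁-u₁*w₀), hw]
    have ht0 : 0 ≤ u₀*w₀+u₁*w₁ := by nlinarith [sq_nonneg u₀, sq_nonneg u₁]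
    have h4 : u₀^2+u₁^2 ≤ 4 := by nlinarith [hCS, hW, ht0]
    exact ⟨h4, fwd a₁ b₁ a₂ b₂ w₀ w₁ u₀ u₁ ha₁ ha₂ hw hb₁ hb₂ hw₁ h1w hw2 h12 hW hA hB⟩
  · rintro (h | h | ⟨h4, hL⟩)
    · exact ⟨a₁, b₁, ha₁, le_refl _, h12.le, hb₁, h⟩
    · exact ⟨a₂, b₂, ha₂, h12.le, le_refl _, hb₂, h⟩
    · exact bwd a₁ b₁ a₂ b₂ u₀ u₁ ha₁ ha₂ hb₁ hb₂ h12 h4 hL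

lemma norm_sq_E2 (v : EuclideanSpace ℝ (Fin 2)) : ‖v‖^2 = (v 0)^2 + (v 1)^2 := by
  rw [EuclideanSpace.norm_eq, Real.sq_sqrt (by positivity)]
  simp [Fin.sum_univ_two, sq_abs]

lemma norm_le_iff_E2 (v : EuclideanSpace ℝ (Fin 2)) (t : ℝ) (ht : 0 ≤ t) :
    ‖v‖ ≤ t ↔ (v 0)^2+(v 1)^2 ≤ t^2 := by
  rw [← norm_sq_E2]
  constructor
  · intro h; nlinarith [norm_nonneg v]
  · intro h; nlinarith [norm_nonneg v]

lemma norm_eq_one_iff_E2 (v : EuclideanSpace ℝ (Fin 2)) :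
    ‖v‖ = 1 ↔ (v 0)^2+(v 1)^2 = 1 := by
  rw [← norm_sq_E2]
  constructor
  · intro h; rw [h]; norm_num
  · intro h; nlinarith [norm_nonneg v]

end Stmt15Aux

open Stmt15Aux in
/-- The closed unit disc `D(x)` intersects a lower arc `e` if and only if one
of its endpoints lies in `D(x)`, or `x ∈ L(e)`, i.e. `x` lies in `D⁺(c)` on or
below the line `ℓ` through the tangent points `2p₁ - c` and `2p₂ - c`. -/
theorem stmt_15 (e : LowerArc) (x : E2) :
    (∃ s ∈ e.pts, ‖x - s‖ ≤ 1) ↔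
      ‖x - e.p₁‖ ≤ 1 ∨ ‖x - e.p₂‖ ≤ 1 ∨ (‖x - e.c‖ ≤ 2 ∧ x ∈ e.lowerHalf) := by
  set a₁ := e.p₁ 0 - e.c 0 with ha₁def
  set b₁ := e.p₁ 1 - e.c 1 with hb₁def
  set a₂ := e.p₂ 0 - e.c 0 with ha₂def
  set b₂ := e.p₂ 1 - e.c 1 with hb₂def
  set u₀ := x 0 - e.c 0 with hu₀def
  set u₁ := x 1 - e.c 1 with hu₁def
  have ha₁ : a₁^2+b₁^2 = 1 := by
    have := (norm_eq_one_iff_E2 (e.p₁ - e.c)).1 e.h₁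
    simpa using this
  have ha₂ : a₂^2+b₂^2 = 1 := by
    have := (norm_eq_one_iff_E2 (e.p₂ - e.c)).1 e.h₂
    simpa using this
  have hb₁ : b₁ ≤ 0 := by simp only [hb₁def]; linarith [e.hy₁]
  have hb₂ : b₂ ≤ 0 := by simp only [hb₂def]; linarith [e.hy₂]
  have h12 : a₁ < a₂ := by simp only [ha₁def, ha₂def]; linarith [e.hx]
  have key := main_real a₁ b₁ a₂ b₂ u₀ u₁ ha₁ ha₂ hb₁ hb₂ h12
  have lhs_iff : (∃ s ∈ e.pts, ‖x - s‖ ≤ 1) ↔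
      (∃ w₀ w₁ : ℝ, w₀^2+w₁^2 = 1 ∧ a₁ ≤ w₀ ∧ w₀ ≤ a₂ ∧ w₁ ≤ 0 ∧
        (u₀-w₀)^2+(u₁-w₁)^2 ≤ 1) := by
    constructor
    · rintro ⟨s, ⟨hs1, hs2, hs3, hs4⟩, hxs⟩
      refine ⟨s 0 - e.c 0, s 1 - e.c 1, ?_, ?_, ?_, ?_, ?_⟩
      · have := (norm_eq_one_iff_E2 (s - e.c)).1 hs1
        simpa using this
      · simp only [ha₁def]; linarith
      · simp only [ha₂def]; linarith
      · linarith
      · have h := (norm_le_iff_E2 (x - s) 1 (by norm_num)).1 hxs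
        simp only [PiLp.sub_apply] at h
        have e0 : u₀ - (s 0 - e.c 0) = x 0 - s 0 := by
          simp only [hu₀def]; ring
        have e1 : u₁ - (s 1 - e.c 1) = x 1 - s 1 := by
          simp only [hu₁def]; ring
        rw [e0, e1]; linarith [h]
    · rintro ⟨w₀, w₁, hw, h1w, hw2, hw₁, hd⟩
      refine ⟨(WithLp.equiv 2 (Fin 2 → ℝ)).symm ![e.c 0 + w₀, e.c 1 + w₁],
        ⟨?_, ?_, ?_, ?_⟩, ?_⟩
      · rw [norm_eq_one_iff_E2]
        simp only [PiLp.sub_apply, WithLp.equiv_symm_apply, WithLp.ofLp_toLp]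
        norm_num
        linarith [hw]
      · simp only [ha₁def] at h1w
        simp only [WithLp.equiv_symm_apply, WithLp.ofLp_toLp]
        norm_num
        linarith
      · simp only [ha₂def] at hw2
        simp only [WithLp.equiv_symm_apply, WithLp.ofLp_toLp]
        norm_num
        linarith
      · simp only [WithLp.equiv_symm_apply, WithLp.ofLp_toLp]
        norm_num
        linarith [hw₁]
      · rw [norm_le_iff_E2 _ 1 (by norm_num)]
        simp only [PiLp.sub_apply, WithLp.equiv_symm_apply, WithLp.ofLp_toLp]
        have e0 : x 0 - ![e.c 0 + w₀, e.c 1 + w₁] 0 = u₀ - w₀ := by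
          simp only [hu₀def]
          norm_num
          ring
        have e1 : x 1 - ![e.c 0 + w₀, e.c 1 + w₁] 1 = u₁ - w₁ := by
          simp only [hu₁def]
          norm_num
          ring
        rw [e0, e1]
        norm_num
        linarith [hd]
  have d1_iff : ‖x - e.p₁‖ ≤ 1 ↔ (u₀-a₁)^2+(u₁-b₁)^2 ≤ 1 := by
    rw [norm_le_iff_E2 _ 1 (by norm_num)]
    have e0 : (x - e.p₁) 0 = u₀ - a₁ := by
      simp only [PiLp.sub_apply, hu₀def, ha₁def]; ring
    have e1 : (x - e.p₁) 1 = u₁ - b₁ := by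
      simp only [PiLp.sub_apply, hu₁def, hb₁def]; ring
    rw [e0, e1]; norm_num
  have d2_iff : ‖x - e.p₂‖ ≤ 1 ↔ (u₀-a₂)^2+(u₁-b₂)^2 ≤ 1 := by
    rw [norm_le_iff_E2 _ 1 (by norm_num)]
    have e0 : (x - e.p₂) 0 = u₀ - a₂ := by
      simp only [PiLp.sub_apply, hu₀def, ha₂def]; ring
    have e1 : (x - e.p₂) 1 = u₁ - b₂ := by
      simp only [PiLp.sub_apply, hu₁def, hb₂def]; ring
    rw [e0, e1]; norm_num
  have dc_iff : ‖x - e.c‖ ≤ 2 ↔ u₀^2+u₁^2 ≤ 4 := by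
    rw [norm_le_iff_E2 _ 2 (by norm_num)]
    have e0 : (x - e.c) 0 = u₀ := by simp only [PiLp.sub_apply, hu₀def]
    have e1 : (x - e.c) 1 = u₁ := by simp only [PiLp.sub_apply, hu₁def]
    rw [e0, e1]; norm_num
  have lh_iff : x ∈ e.lowerHalf ↔ (a₂-a₁)*(u₁-2*b₁) ≤ (b₂-b₁)*(u₀-2*a₁) := by
    simp only [LowerArc.lowerHalf, LowerArc.t₁, LowerArc.t₂, Set.mem_setOf_eq,
      PiLp.sub_apply, PiLp.smul_apply, smul_eq_mul]
    constructor
    · intro h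
      simp only [ha₁def, ha₂def, hb₁def, hb₂def, hu₀def, hu₁def]
      nlinarith [h]
    · intro h
      simp only [ha₁def, ha₂def, hb₁def, hb₂def, hu₀def, hu₁def] at h
      nlinarith [h]
  rw [lhs_iff, d1_iff, d2_iff, dc_iff, lh_iff, key]
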